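/- For every x ∈ [0, π_{4/3,4}/4), one has the multiple-angle formula sin_{4/3,4}(2x) = 2·sin_{4/3,4}(x)·(cos_{4/3,4}(x))^{1/3} / √(1 + 4·(sin_{4/3,4}(x))^4·(cos_{4/3,4}(x))^{4/3}). -/

import Mathlib

/-!
Write `F = sin_{4/3,4}⁻¹` and `u(s) = 2s(1-s⁴)^{1/4} / √(1+4s⁴(1-s⁴))`. Since
`1 - u(s)⁴ = (1-2s⁴)⁴ / (1+4s⁴(1-s⁴))²`, a direct computation gives
`u'(s) (1-u(s)⁴)^{-3/4} = 2 (1-s⁴)^{-3/4}` for `s⁴ < 1/2`, hence `F(u(s)) = 2 F(s)` on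
`[0, 2^{-1/4}]`. As `u(2^{-1/4}) = 1`, this gives `F(2^{-1/4}) = π_{4/3,4}/4`, and for
`0 ≤ x ≤ π_{4/3,4}/4` applying `sin_{4/3,4}` to `F(u(sin_{4/3,4} x)) = 2x` yields
`sin_{4/3,4}(2x) = u(sin_{4/3,4} x)`. By the inverse function theorem
`cos_{4/3,4} = (1 - sin_{4/3,4}⁴)^{3/4}`, which turns `u(sin_{4/3,4} x)` into the right-hand side.
-/

open Real Set MeasureTheory Filter

/-- `sin_{p,q}^{-1}(x) = ∫₀ˣ (1-t^q)^{-1/p} dt`. -/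
noncomputable def arcsinpq (p q x : ℝ) : ℝ := ∫ t in (0:ℝ)..x, (1 - t ^ q) ^ (-(1 / p))

/-- The generalized π: `π_{p,q} = 2 sin_{p,q}^{-1}(1)`. -/
noncomputable def pipq (p q : ℝ) : ℝ := 2 * arcsinpq p q 1

/-- `sin_{p,q}` on `[0, π_{p,q}/2]`, as the inverse of `arcsinpq p q : [0,1] → [0, π_{p,q}/2]`. -/
noncomputable def sinHalf (p q : ℝ) : ℝ → ℝ := Function.invFunOn (arcsinpq p q) (Set.Icc 0 1)

/-- `sin_{p,q}` on all of `ℝ`: extended to `[π_{p,q}/2, π_{p,q}]` by `sin_{p,q}(π_{p,q}-x)` and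
then to `ℝ` as the odd `2π_{p,q}`-periodic continuation. -/
noncomputable def sinpq (p q x : ℝ) : ℝ :=
  let T := pipq p q
  let y := x - 2 * T * (⌊(x + T) / (2 * T)⌋ : ℝ)
  if y < 0 then -(sinHalf p q (if -y ≤ T / 2 then -y else T + y))
  else sinHalf p q (if y ≤ T / 2 then y else T - y)

/-- `cos_{p,q} = (sin_{p,q})'`. -/
noncomputable def cospq (p q : ℝ) : ℝ → ℝ := deriv (sinpq p q)

/-- Rising factorial (Pochhammer symbol) `(a)_n = a(a+1)⋯(a+n-1)`. -/
noncomputable def poch (a : ℝ) (n : ℕ) : ℝ := ∏ i ∈ Finset.range n, (a + i)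

/-- The integrand of `arcsinpq p n` with the monoid power `t ^ n`, which unlike `Real.rpow` is
meaningful for `t < 0`; for even `n` it is even in `t`. -/
noncomputable def arcsinpqIntegrand (p : ℝ) (n : ℕ) (t : ℝ) : ℝ := (1 - t ^ n) ^ (-(1 / p))

section Integrand

variable {p : ℝ} {n : ℕ} {t : ℝ}

lemma one_sub_pow_pos_of_abs_lt (hn : Even n) (hn0 : n ≠ 0) (ht : |t| < 1) : 0 < 1 - t ^ n := by
  rw [← hn.pow_abs, sub_pos]
  exact pow_lt_one₀ (abs_nonneg t) ht hn0

lemma arcsinpqIntegrand_pos (hn : Even n) (hn0 : n ≠ 0) (ht : |t| < 1) :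
    0 < arcsinpqIntegrand p n t :=
  rpow_pos_of_pos (one_sub_pow_pos_of_abs_lt hn hn0 ht) _

lemma arcsinpqIntegrand_neg (hn : Even n) (t : ℝ) :
    arcsinpqIntegrand p n (-t) = arcsinpqIntegrand p n t := by
  simp only [arcsinpqIntegrand, hn.neg_pow]

lemma continuousAt_arcsinpqIntegrand (hn : Even n) (hn0 : n ≠ 0) (ht : |t| < 1) :
    ContinuousAt (arcsinpqIntegrand p n) t :=
  (continuousAt_const.sub (continuousAt_pow t n)).rpow_const
    (Or.inl (one_sub_pow_pos_of_abs_lt hn hn0 ht).ne')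

lemma measurable_arcsinpqIntegrand : Measurable (arcsinpqIntegrand p n) := by
  unfold arcsinpqIntegrand
  fun_prop

lemma intervalIntegrable_arcsinpqIntegrand_zero_one (hp : 1 < p) (hn0 : n ≠ 0) :
    IntervalIntegrable (arcsinpqIntegrand p n) volume 0 1 := by
  have hdom : IntervalIntegrable (fun t : ℝ => (1 - t) ^ (-(1 / p))) volume 0 1 := by
    have h := (intervalIntegral.intervalIntegrable_rpow' (a := 0) (b := 1) (r := -(1 / p))
      (by rw [neg_lt_neg_iff, div_lt_one (by linarith)]; exact hp)).comp_sub_left 1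
    simpa using h.symm
  refine hdom.mono_fun' measurable_arcsinpqIntegrand.aestronglyMeasurable ?_
  rw [uIoc_of_le zero_le_one]
  filter_upwards [ae_restrict_mem measurableSet_Ioc] with t ⟨ht0, ht1⟩
  have hpow : t ^ n ≤ t := pow_le_of_le_one ht0.le ht1 hn0
  have hexp : -(1 / p) ≤ 0 := by rw [neg_nonpos]; positivity
  have hbase : 0 ≤ 1 - t ^ n := by linarith [pow_le_one₀ ht0.le ht1 (n := n)]
  rw [arcsinpqIntegrand, norm_of_nonneg (rpow_nonneg hbase _)]
  rcases ht1.lt_or_eq with ht1 | rfl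
  · exact rpow_le_rpow_of_nonpos (by linarith) (by linarith) hexp
  · simp

lemma intervalIntegrable_arcsinpqIntegrand (hp : 1 < p) (hn : Even n) (hn0 : n ≠ 0) :
    IntervalIntegrable (arcsinpqIntegrand p n) volume (-1) 1 := by
  have h01 := intervalIntegrable_arcsinpqIntegrand_zero_one hp hn0
  have hm10 : IntervalIntegrable (arcsinpqIntegrand p n) volume (-1) 0 := by
    simpa [arcsinpqIntegrand_neg hn] using (h01.comp_sub_left 0).symm
  exact hm10.trans h01

end Integrand

lemma arcsinpq_zero (p q : ℝ) : arcsinpq p q 0 = 0 := by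
  simp [arcsinpq]

lemma pipq_div_two (p q : ℝ) : pipq p q / 2 = arcsinpq p q 1 := by
  rw [pipq]
  ring

lemma arcsinpq_natCast (p : ℝ) (n : ℕ) (x : ℝ) :
    arcsinpq p n x = ∫ t in (0 : ℝ)..x, arcsinpqIntegrand p n t := by
  simp only [arcsinpq, arcsinpqIntegrand, rpow_natCast]

section Arcsin

variable {p : ℝ} {n : ℕ}

lemma arcsinpq_neg (hn : Even n) (x : ℝ) : arcsinpq p n (-x) = -arcsinpq p n x := by
  have h := intervalIntegral.integral_comp_neg (a := 0) (b := x) (arcsinpqIntegrand p n)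
  simp only [arcsinpqIntegrand_neg hn, neg_zero] at h
  rw [arcsinpq_natCast, arcsinpq_natCast, h, intervalIntegral.integral_symm (-x) 0]

lemma intervalIntegrable_arcsinpqIntegrand_of_mem (hp : 1 < p) (hn : Even n) (hn0 : n ≠ 0)
    {x y : ℝ} (hx : x ∈ Icc (-1) 1) (hy : y ∈ Icc (-1) 1) :
    IntervalIntegrable (arcsinpqIntegrand p n) volume x y := by
  rw [← uIcc_of_le (by norm_num : (-1 : ℝ) ≤ 1)] at hx hy
  exact (intervalIntegrable_arcsinpqIntegrand hp hn hn0).mono_set (uIcc_subset_uIcc hx hy)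

lemma strictMonoOn_arcsinpq (hp : 1 < p) (hn : Even n) (hn0 : n ≠ 0) :
    StrictMonoOn (arcsinpq p n) (Icc (-1) 1) := by
  intro x hx y hy hxy
  have h0 : (0 : ℝ) ∈ Icc (-1) 1 := ⟨by norm_num, by norm_num⟩
  rw [← sub_pos, arcsinpq_natCast, arcsinpq_natCast, intervalIntegral.integral_interval_sub_left
    (intervalIntegrable_arcsinpqIntegrand_of_mem hp hn hn0 h0 hy)
    (intervalIntegrable_arcsinpqIntegrand_of_mem hp hn hn0 h0 hx)]
  refine intervalIntegral.intervalIntegral_pos_of_pos_on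
    (intervalIntegrable_arcsinpqIntegrand_of_mem hp hn hn0 hx hy) (fun t ht => ?_) hxy
  exact arcsinpqIntegrand_pos hn hn0 (abs_lt.2 ⟨by linarith [hx.1, ht.1], by linarith [hy.2, ht.2]⟩)

lemma continuousOn_arcsinpq (hp : 1 < p) (hn : Even n) (hn0 : n ≠ 0) :
    ContinuousOn (arcsinpq p n) (Icc (-1) 1) := by
  have h := intervalIntegral.continuousOn_primitive_interval'
    (intervalIntegrable_arcsinpqIntegrand hp hn hn0) (a := 0)
    (by rw [uIcc_of_le (by norm_num)]; norm_num)
  rw [uIcc_of_le (by norm_num)] at h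
  simpa only [← arcsinpq_natCast] using h

lemma hasDerivAt_arcsinpq (hp : 1 < p) (hn : Even n) (hn0 : n ≠ 0) {x : ℝ} (hx : |x| < 1) :
    HasDerivAt (arcsinpq p n) (arcsinpqIntegrand p n x) x := by
  obtain ⟨hx1, hx2⟩ := abs_lt.1 hx
  have h := intervalIntegral.integral_hasDerivAt_right
    (intervalIntegrable_arcsinpqIntegrand_of_mem hp hn hn0
      (⟨by norm_num, by norm_num⟩ : (0 : ℝ) ∈ Icc (-1) 1) ⟨hx1.le, hx2.le⟩)
    measurable_arcsinpqIntegrand.stronglyMeasurable.stronglyMeasurableAtFilter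
    (continuousAt_arcsinpqIntegrand hn hn0 hx)
  rwa [← funext (arcsinpq_natCast p n)] at h

lemma arcsinpq_one_pos (hp : 1 < p) (hn : Even n) (hn0 : n ≠ 0) : 0 < arcsinpq p n 1 := by
  simpa [arcsinpq_zero] using strictMonoOn_arcsinpq hp hn hn0
    (⟨by norm_num, by norm_num⟩ : (0 : ℝ) ∈ Icc (-1) 1) ⟨by norm_num, le_rfl⟩ one_pos

lemma mapsTo_arcsinpq (hp : 1 < p) (hn : Even n) (hn0 : n ≠ 0) :
    MapsTo (arcsinpq p n) (Icc (-1) 1) (Icc (-arcsinpq p n 1) (arcsinpq p n 1)) := by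
  intro x hx
  have hmono := (strictMonoOn_arcsinpq hp hn hn0).monotoneOn
  refine ⟨?_, hmono hx ⟨by norm_num, le_rfl⟩ hx.2⟩
  rw [← arcsinpq_neg hn]
  exact hmono ⟨le_rfl, by norm_num⟩ hx hx.1

end Arcsin

lemma sinpq_of_abs_le {p q x : ℝ} (hT : 0 < pipq p q) (hx : |x| ≤ pipq p q / 2) :
    sinpq p q x = if x < 0 then -sinHalf p q (-x) else sinHalf p q x := by
  obtain ⟨hx1, hx2⟩ := abs_le.1 hx
  have hfloor : ⌊(x + pipq p q) / (2 * pipq p q)⌋ = 0 := by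
    rw [Int.floor_eq_zero_iff, mem_Ico, div_lt_one (by positivity)]
    exact ⟨div_nonneg (by linarith) (by positivity), by linarith⟩
  simp only [sinpq, hfloor, Int.cast_zero, mul_zero, sub_zero]
  split_ifs <;> first | rfl | linarith

section Sin

variable {p : ℝ} {n : ℕ}

lemma surjOn_arcsinpq_zero_one (hp : 1 < p) (hn : Even n) (hn0 : n ≠ 0) :
    SurjOn (arcsinpq p n) (Icc 0 1) (Icc 0 (arcsinpq p n 1)) := by
  have h := intermediate_value_Icc zero_le_one
    ((continuousOn_arcsinpq hp hn hn0).mono (Icc_subset_Icc (by norm_num) le_rfl))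
  rwa [arcsinpq_zero] at h

lemma arcsinpq_sinHalf (hp : 1 < p) (hn : Even n) (hn0 : n ≠ 0) :
    RightInvOn (sinHalf p n) (arcsinpq p n) (Icc 0 (arcsinpq p n 1)) :=
  (surjOn_arcsinpq_zero_one hp hn hn0).rightInvOn_invFunOn

lemma mapsTo_sinHalf (hp : 1 < p) (hn : Even n) (hn0 : n ≠ 0) :
    MapsTo (sinHalf p n) (Icc 0 (arcsinpq p n 1)) (Icc 0 1) :=
  (surjOn_arcsinpq_zero_one hp hn hn0).mapsTo_invFunOn

lemma arcsinpq_sinpq (hp : 1 < p) (hn : Even n) (hn0 : n ≠ 0) :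
    LeftInvOn (arcsinpq p n) (sinpq p n) (Icc (-arcsinpq p n 1) (arcsinpq p n 1)) := by
  intro x hx
  have hT : 0 < pipq p n := by rw [pipq]; linarith [arcsinpq_one_pos hp hn hn0]
  rw [sinpq_of_abs_le hT (by rw [pipq_div_two]; exact abs_le.2 hx)]
  split_ifs with h
  · rw [arcsinpq_neg hn, arcsinpq_sinHalf hp hn hn0 ⟨by linarith, by linarith [hx.1]⟩, neg_neg]
  · exact arcsinpq_sinHalf hp hn hn0 ⟨not_lt.1 h, hx.2⟩

lemma mapsTo_sinpq (hp : 1 < p) (hn : Even n) (hn0 : n ≠ 0) :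
    MapsTo (sinpq p n) (Icc (-arcsinpq p n 1) (arcsinpq p n 1)) (Icc (-1) 1) := by
  intro x hx
  have hT : 0 < pipq p n := by rw [pipq]; linarith [arcsinpq_one_pos hp hn hn0]
  rw [sinpq_of_abs_le hT (by rw [pipq_div_two]; exact abs_le.2 hx)]
  split_ifs with h
  · obtain ⟨h0, h1⟩ := mapsTo_sinHalf hp hn hn0 (x := -x) ⟨by linarith, by linarith [hx.1]⟩
    exact ⟨by linarith, by linarith⟩
  · obtain ⟨h0, h1⟩ := mapsTo_sinHalf hp hn hn0 ⟨not_lt.1 h, hx.2⟩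
    exact ⟨by linarith, h1⟩

lemma sinpq_arcsinpq (hp : 1 < p) (hn : Even n) (hn0 : n ≠ 0) :
    LeftInvOn (sinpq p n) (arcsinpq p n) (Icc (-1) 1) := fun _ hv =>
  (strictMonoOn_arcsinpq hp hn hn0).injOn (mapsTo_sinpq hp hn hn0 (mapsTo_arcsinpq hp hn hn0 hv))
    hv (arcsinpq_sinpq hp hn hn0 (mapsTo_arcsinpq hp hn hn0 hv))

lemma sinpq_mem_Ioo (hp : 1 < p) (hn : Even n) (hn0 : n ≠ 0) {x : ℝ}
    (hx : x ∈ Ioo (-arcsinpq p n 1) (arcsinpq p n 1)) : sinpq p n x ∈ Ioo (-1) 1 := by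
  obtain ⟨h1, h2⟩ := mapsTo_sinpq hp hn hn0 (Ioo_subset_Icc_self hx)
  have hinv := arcsinpq_sinpq hp hn hn0 (Ioo_subset_Icc_self hx)
  refine ⟨h1.lt_of_ne fun h => ?_, h2.lt_of_ne fun h => ?_⟩
  · rw [← h, arcsinpq_neg hn] at hinv
    linarith [hx.1]
  · rw [h] at hinv
    linarith [hx.2]

lemma strictMonoOn_sinpq (hp : 1 < p) (hn : Even n) (hn0 : n ≠ 0) :
    StrictMonoOn (sinpq p n) (Icc (-arcsinpq p n 1) (arcsinpq p n 1)) := fun x hx y hy hxy => by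
  rwa [← (strictMonoOn_arcsinpq hp hn hn0).lt_iff_lt (mapsTo_sinpq hp hn hn0 hx)
    (mapsTo_sinpq hp hn hn0 hy), arcsinpq_sinpq hp hn hn0 hx, arcsinpq_sinpq hp hn hn0 hy]

lemma continuousAt_sinpq (hp : 1 < p) (hn : Even n) (hn0 : n ≠ 0) {x : ℝ}
    (hx : x ∈ Ioo (-arcsinpq p n 1) (arcsinpq p n 1)) : ContinuousAt (sinpq p n) x := by
  have hsurj : SurjOn (sinpq p n) (Icc (-arcsinpq p n 1) (arcsinpq p n 1)) (Icc (-1) 1) :=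
    fun v hv => ⟨arcsinpq p n v, mapsTo_arcsinpq hp hn hn0 hv, sinpq_arcsinpq hp hn hn0 hv⟩
  obtain ⟨h1, h2⟩ := sinpq_mem_Ioo hp hn hn0 hx
  exact (strictMonoOn_sinpq hp hn hn0).continuousAt_of_image_mem_nhds (Icc_mem_nhds hx.1 hx.2)
    (mem_of_superset (Icc_mem_nhds h1 h2) hsurj)

lemma hasDerivAt_sinpq (hp : 1 < p) (hn : Even n) (hn0 : n ≠ 0) {x : ℝ}
    (hx : x ∈ Ioo (-arcsinpq p n 1) (arcsinpq p n 1)) :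
    HasDerivAt (sinpq p n) (arcsinpqIntegrand p n (sinpq p n x))⁻¹ x := by
  have hsin := abs_lt.2 (sinpq_mem_Ioo hp hn hn0 hx)
  refine (hasDerivAt_arcsinpq hp hn hn0 hsin).of_local_left_inverse
    (continuousAt_sinpq hp hn hn0 hx) (arcsinpqIntegrand_pos hn hn0 hsin).ne' ?_
  filter_upwards [Ioo_mem_nhds hx.1 hx.2] with y hy
  exact arcsinpq_sinpq hp hn hn0 (Ioo_subset_Icc_self hy)

lemma one_sub_sinpq_pow_pos (hp : 1 < p) (hn : Even n) (hn0 : n ≠ 0) {x : ℝ}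
    (hx : x ∈ Ioo (-arcsinpq p n 1) (arcsinpq p n 1)) : 0 < 1 - sinpq p n x ^ n :=
  one_sub_pow_pos_of_abs_lt hn hn0 (abs_lt.2 (sinpq_mem_Ioo hp hn hn0 hx))

lemma cospq_eq_one_sub_sinpq_pow_rpow (hp : 1 < p) (hn : Even n) (hn0 : n ≠ 0) {x : ℝ}
    (hx : x ∈ Ioo (-arcsinpq p n 1) (arcsinpq p n 1)) :
    cospq p n x = (1 - sinpq p n x ^ n) ^ (1 / p) := by
  rw [cospq, (hasDerivAt_sinpq hp hn hn0 hx).deriv, arcsinpqIntegrand,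
    rpow_neg (one_sub_sinpq_pow_pos hp hn hn0 hx).le, inv_inv]

end Sin

noncomputable def doubleAngleMap (s : ℝ) : ℝ :=
  2 * s * (1 - s ^ 4) ^ ((1 : ℝ) / 4) / √(1 + 4 * s ^ 4 * (1 - s ^ 4))

section DoubleAngle

variable {s : ℝ}

lemma doubleAngleMap_zero : doubleAngleMap 0 = 0 := by
  simp [doubleAngleMap]

lemma doubleAngleMap_radicand_pos (hs : s ^ 4 ≤ 1) : 0 < 1 + 4 * s ^ 4 * (1 - s ^ 4) := by
  have : 0 ≤ s ^ 4 * (1 - s ^ 4) := mul_nonneg (by positivity) (by linarith)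
  linarith

lemma one_sub_doubleAngleMap_pow_four (hs : s ^ 4 ≤ 1) :
    1 - doubleAngleMap s ^ 4 = (1 - 2 * s ^ 4) ^ 4 / (1 + 4 * s ^ 4 * (1 - s ^ 4)) ^ 2 := by
  have hB := doubleAngleMap_radicand_pos hs
  have hP : ((1 - s ^ 4) ^ ((1 : ℝ) / 4)) ^ 4 = 1 - s ^ 4 := by
    rw [← rpow_natCast, ← rpow_mul (by linarith)]
    norm_num
  have hQ : √(1 + 4 * s ^ 4 * (1 - s ^ 4)) ^ 4 = (1 + 4 * s ^ 4 * (1 - s ^ 4)) ^ 2 := by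
    rw [show (4 : ℕ) = 2 * 2 from rfl, pow_mul, sq_sqrt hB.le]
  rw [doubleAngleMap, div_pow, mul_pow, mul_pow, hP, hQ, eq_div_iff (pow_pos hB 2).ne', sub_mul,
    div_mul_cancel₀ _ (pow_pos hB 2).ne']
  ring

lemma doubleAngleMap_mem_Icc (hs0 : 0 ≤ s) (hs : s ^ 4 ≤ 1) : doubleAngleMap s ∈ Icc 0 1 := by
  have hu0 : 0 ≤ doubleAngleMap s := by
    have := doubleAngleMap_radicand_pos hs
    unfold doubleAngleMap
    positivity
  refine ⟨hu0, (pow_le_one_iff_of_nonneg hu0 four_ne_zero).1 ?_⟩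
  have := one_sub_doubleAngleMap_pow_four hs
  have : 0 ≤ (1 - 2 * s ^ 4) ^ 4 / (1 + 4 * s ^ 4 * (1 - s ^ 4)) ^ 2 := by positivity
  linarith

lemma doubleAngleMap_eq_one (hs0 : 0 ≤ s) (hs : s ^ 4 = 1 / 2) : doubleAngleMap s = 1 := by
  have h : 1 - doubleAngleMap s ^ 4 = 0 := by
    rw [one_sub_doubleAngleMap_pow_four (by linarith), hs]
    norm_num
  exact (pow_eq_one_iff_of_nonneg (doubleAngleMap_mem_Icc hs0 (by linarith)).1 four_ne_zero).1
    (by linarith)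

lemma continuousAt_doubleAngleMap (hs : s ^ 4 ≤ 1) : ContinuousAt doubleAngleMap s := by
  unfold doubleAngleMap
  exact ContinuousAt.div (by fun_prop (disch := norm_num)) (by fun_prop)
    (sqrt_pos.2 (doubleAngleMap_radicand_pos hs)).ne'

lemma abs_doubleAngleMap_lt_one (hs : s ^ 4 < 1 / 2) : |doubleAngleMap s| < 1 := by
  have h := one_sub_doubleAngleMap_pow_four (s := s) (by linarith)
  have hpos : 0 < (1 - 2 * s ^ 4) ^ 4 / (1 + 4 * s ^ 4 * (1 - s ^ 4)) ^ 2 := by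
    have := doubleAngleMap_radicand_pos (s := s) (by linarith)
    have : 0 < 1 - 2 * s ^ 4 := by linarith
    positivity
  rw [← (pow_lt_one_iff_of_nonneg (abs_nonneg _) four_ne_zero), (by decide : Even 4).pow_abs]
  linarith

lemma arcsinpqIntegrand_doubleAngleMap (hs : s ^ 4 < 1 / 2) :
    arcsinpqIntegrand (4 / 3) 4 (doubleAngleMap s)
      = √(1 + 4 * s ^ 4 * (1 - s ^ 4)) ^ 3 / (1 - 2 * s ^ 4) ^ 3 := by
  have hB := doubleAngleMap_radicand_pos (s := s) (by linarith)
  have hE : 0 < 1 - 2 * s ^ 4 := by linarith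
  set Q := √(1 + 4 * s ^ 4 * (1 - s ^ 4))
  have hQ : 0 < Q := sqrt_pos.2 hB
  have h : 1 - doubleAngleMap s ^ 4 = ((1 - 2 * s ^ 4) / Q) ^ 4 := by
    rw [one_sub_doubleAngleMap_pow_four (by linarith), div_pow,
      show Q ^ 4 = (Q ^ 2) ^ 2 by ring, sq_sqrt hB.le]
  rw [arcsinpqIntegrand, h, ← rpow_natCast, ← rpow_mul (by positivity),
    show ((4 : ℕ) : ℝ) * -(1 / (4 / 3)) = -(3 : ℕ) by norm_num, rpow_neg (by positivity),
    rpow_natCast, ← inv_pow, inv_div, div_pow]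

lemma hasDerivAt_doubleAngleMap (hs : s ^ 4 < 1) :
    HasDerivAt doubleAngleMap (2 * (1 - 2 * s ^ 4) ^ 3 * arcsinpqIntegrand (4 / 3) 4 s /
      √(1 + 4 * s ^ 4 * (1 - s ^ 4)) ^ 3) s := by
  have hA : 0 < 1 - s ^ 4 := by linarith
  have hB := doubleAngleMap_radicand_pos hs.le
  set P := (1 - s ^ 4) ^ ((1 : ℝ) / 4) with hP
  set Q := √(1 + 4 * s ^ 4 * (1 - s ^ 4)) with hQ
  have hnum : HasDerivAt (fun t : ℝ => 2 * t * (1 - t ^ 4) ^ ((1 : ℝ) / 4))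
      (2 * P - 2 * s ^ 4 * P / (1 - s ^ 4)) s := by
    have hA' : HasDerivAt (fun t : ℝ => 1 - t ^ 4) (-(4 * s ^ 3)) s := by
      simpa using (hasDerivAt_pow 4 s).const_sub 1
    refine (((hasDerivAt_id' s).const_mul 2).mul
      (hA'.rpow_const (p := 1 / 4) (Or.inl hA.ne'))).congr_deriv ?_
    rw [rpow_sub hA, rpow_one]
    field_simp
    ring
  have hden : HasDerivAt (fun t : ℝ => √(1 + 4 * t ^ 4 * (1 - t ^ 4)))
      ((16 * s ^ 3 - 32 * s ^ 7) / (2 * Q)) s := by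
    have hB' : HasDerivAt (fun t : ℝ => 1 + 4 * t ^ 4 * (1 - t ^ 4))
        (16 * s ^ 3 - 32 * s ^ 7) s := by
      refine (((hasDerivAt_pow 4 s).const_mul 4).mul
        ((hasDerivAt_pow 4 s).const_sub 1)).const_add 1 |>.congr_deriv ?_
      push_cast
      ring
    exact hB'.sqrt hB.ne'
  have hg : arcsinpqIntegrand (4 / 3) 4 s = P / (1 - s ^ 4) := by
    rw [arcsinpqIntegrand, hP, ← rpow_sub_one hA.ne']
    norm_num
  have hQ2 : Q ^ 2 = 1 + 4 * s ^ 4 * (1 - s ^ 4) := sq_sqrt hB.le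
  have hQpos : 0 < Q := sqrt_pos.2 hB
  refine (hnum.div hden hQpos.ne').congr_deriv ?_
  rw [hg, ← hP, ← hQ]
  clear_value P Q
  field_simp
  linear_combination P * (2 - 4 * s ^ 4) * hQ2

lemma hasDerivAt_arcsinpq_doubleAngleMap (hs : s ^ 4 < 1 / 2) :
    HasDerivAt (fun t => arcsinpq (4 / 3) 4 (doubleAngleMap t))
      (2 * arcsinpqIntegrand (4 / 3) 4 s) s := by
  have hF := hasDerivAt_arcsinpq (p := 4 / 3) (n := 4) (by norm_num) (by decide) (by norm_num)
    (abs_doubleAngleMap_lt_one hs)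
  rw [Nat.cast_ofNat] at hF
  refine (hF.comp s (hasDerivAt_doubleAngleMap (by linarith))).congr_deriv ?_
  have hE : 0 < 1 - 2 * s ^ 4 := by linarith
  have hQ : 0 < √(1 + 4 * s ^ 4 * (1 - s ^ 4)) :=
    sqrt_pos.2 (doubleAngleMap_radicand_pos (by linarith))
  rw [arcsinpqIntegrand_doubleAngleMap hs, div_mul_div_comm, div_eq_iff (by positivity)]
  ring

lemma arcsinpq_doubleAngleMap (hs0 : 0 ≤ s) (hs : s ^ 4 ≤ 1 / 2) :
    arcsinpq (4 / 3) 4 (doubleAngleMap s) = 2 * arcsinpq (4 / 3) 4 s := by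
  have hF := continuousOn_arcsinpq (p := 4 / 3) (n := 4) (by norm_num) (by decide) (by norm_num)
  rw [Nat.cast_ofNat] at hF
  have hpow : ∀ t ∈ Icc 0 s, t ^ 4 ≤ 1 / 2 := fun t ht => (pow_le_pow_left₀ ht.1 ht.2 4).trans hs
  have hsub : Icc 0 s ⊆ Icc (-1) 1 := fun t ht =>
    ⟨by linarith [ht.1], (pow_le_one_iff_of_nonneg ht.1 four_ne_zero).1 (by linarith [hpow t ht])⟩
  refine eq_of_has_deriv_right_eq (f' := fun t => 2 * arcsinpqIntegrand (4 / 3) 4 t)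
    (g := fun t => 2 * arcsinpq (4 / 3) 4 t)
    (fun t ht => ?_) (fun t ht => ?_)
    (hF.comp
      (fun t ht => (continuousAt_doubleAngleMap (by linarith [hpow t ht])).continuousWithinAt)
      (fun t ht => Icc_subset_Icc (by norm_num) le_rfl
        (doubleAngleMap_mem_Icc ht.1 (by linarith [hpow t ht]))))
    (continuousOn_const.mul (hF.mono hsub)) (by simp [doubleAngleMap_zero, arcsinpq_zero])
    s ⟨hs0, le_rfl⟩
  · exact (hasDerivAt_arcsinpq_doubleAngleMap
      ((pow_lt_pow_left₀ ht.2 ht.1 four_ne_zero).trans_le hs)).hasDerivWithinAt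
  · have hF' := hasDerivAt_arcsinpq (p := 4 / 3) (n := 4) (by norm_num) (by decide) (by norm_num)
      (x := t) (abs_lt.2 ⟨by linarith [ht.1], by linarith [ht.2, (hsub ⟨hs0, le_rfl⟩).2]⟩)
    rw [Nat.cast_ofNat] at hF'
    exact (hF'.const_mul 2).hasDerivWithinAt

end DoubleAngle

lemma arcsinpq_eq_pipq_div_four {c : ℝ} (hc0 : 0 ≤ c) (hc : c ^ 4 = 1 / 2) :
    arcsinpq (4 / 3) 4 c = pipq (4 / 3) 4 / 4 := by
  have h := arcsinpq_doubleAngleMap hc0 hc.le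
  rw [doubleAngleMap_eq_one hc0 hc] at h
  rw [pipq, h]
  ring

lemma sinpq_two_mul {x : ℝ} (hx0 : 0 ≤ x) (hx : x ≤ pipq (4 / 3) 4 / 4) :
    sinpq (4 / 3) 4 (2 * x) = doubleAngleMap (sinpq (4 / 3) 4 x) := by
  have hmono := strictMonoOn_arcsinpq (p := 4 / 3) (n := 4) (by norm_num) (by decide) (by norm_num)
  have hpos := arcsinpq_one_pos (p := 4 / 3) (n := 4) (by norm_num) (by decide) (by norm_num)
  have hinv := arcsinpq_sinpq (p := 4 / 3) (n := 4) (by norm_num) (by decide) (by norm_num)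
  have hinv' := sinpq_arcsinpq (p := 4 / 3) (n := 4) (by norm_num) (by decide) (by norm_num)
  have hmaps := mapsTo_sinpq (p := 4 / 3) (n := 4) (by norm_num) (by decide) (by norm_num)
  simp only [Nat.cast_ofNat] at hmono hpos hinv hinv' hmaps
  obtain ⟨c, hc0, hc⟩ : ∃ c : ℝ, 0 ≤ c ∧ c ^ 4 = 1 / 2 :=
    ⟨_, by positivity, rpow_inv_natCast_pow (by norm_num) four_ne_zero⟩
  have hc1 : c ∈ Icc (-1) 1 :=
    ⟨by linarith, (pow_le_one_iff_of_nonneg hc0 four_ne_zero).1 (by linarith)⟩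
  have hxF : x ∈ Icc (-arcsinpq (4 / 3) 4 1) (arcsinpq (4 / 3) 4 1) := by
    rw [← pipq_div_two] at hpos ⊢
    constructor <;> linarith
  have hy := hinv hxF
  have hy1 := hmaps hxF
  have hy0 : 0 ≤ sinpq (4 / 3) 4 x :=
    (hmono.le_iff_le ⟨by norm_num, by norm_num⟩ hy1).1 (by rwa [arcsinpq_zero, hy])
  have hyc : sinpq (4 / 3) 4 x ≤ c :=
    (hmono.le_iff_le hy1 hc1).1 (by rwa [hy, arcsinpq_eq_pipq_div_four hc0 hc])
  have hy4 : sinpq (4 / 3) 4 x ^ 4 ≤ 1 / 2 := hc ▸ pow_le_pow_left₀ hy0 hyc 4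
  have hu := doubleAngleMap_mem_Icc hy0 (by linarith)
  have h2x : 2 * x = arcsinpq (4 / 3) 4 (doubleAngleMap (sinpq (4 / 3) 4 x)) := by
    rw [arcsinpq_doubleAngleMap hy0 hy4, hy]
  rw [h2x, hinv' (Icc_subset_Icc (by norm_num) le_rfl hu)]

/-- Edmunds–Gurka–Lang multiple-angle formula: for `x ∈ [0, π_{4/3,4}/4)`,
`sin_{4/3,4}(2x) = 2 sin_{4/3,4}(x) cos_{4/3,4}(x)^{1/3} /
  √(1 + 4 sin_{4/3,4}(x)^4 cos_{4/3,4}(x)^{4/3})`. -/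
theorem EGL_multiple_angle :
    ∀ x ∈ Set.Ico (0:ℝ) (pipq (4/3) 4 / 4),
      sinpq (4/3) 4 (2*x)
        = 2 * sinpq (4/3) 4 x * cospq (4/3) 4 x ^ ((1:ℝ)/3) /
          Real.sqrt (1 + 4 * sinpq (4/3) 4 x ^ (4:ℕ) * cospq (4/3) 4 x ^ ((4:ℝ)/3)) := by
  intro x hx
  have hpos := arcsinpq_one_pos (p := 4 / 3) (n := 4) (by norm_num) (by decide) (by norm_num)
  rw [Nat.cast_ofNat, ← pipq_div_two] at hpos
  have hx' : x ∈ Ioo (-arcsinpq (4 / 3) 4 1) (arcsinpq (4 / 3) 4 1) := by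
    rw [← pipq_div_two]
    constructor <;> linarith [hx.1, hx.2]
  have hcos := cospq_eq_one_sub_sinpq_pow_rpow (p := 4 / 3) (n := 4) (by norm_num) (by decide)
    (by norm_num) (x := x)
  have hA := one_sub_sinpq_pow_pos (p := 4 / 3) (n := 4) (by norm_num) (by decide) (by norm_num)
    (x := x)
  simp only [Nat.cast_ofNat] at hcos hA
  rw [sinpq_two_mul hx.1 hx.2.le, hcos hx', ← rpow_mul (hA hx').le, ← rpow_mul (hA hx').le,
    doubleAngleMap]
  norm_num
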